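/- (No entanglement via a commuting mediator) Let H = A ⊗ I ⊗ D + I ⊗ B ⊗ D′ be a Hamiltonian on ℂ^{d_A} ⊗ ℂ^{d_B} ⊗ ℂ^{d_C}, where A and B are Hermitian matrices and D, D′ are real diagonal matrices on ℂ^{d_C}. Let ρ(0) = ρ_{AB} ⊗ ρ_C, where ρ_{AB} is a separable density matrix on ℂ^{d_A} ⊗ ℂ^{d_B} and ρ_C is a density matrix on ℂ^{d_C}. Then for every real t, the reduced state tr_C( exp(−itH) ρ(0) exp(itH) ) is separable; in particular, this mediated dynamics can never generate entanglement between A and B. -/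

import Mathlib

open scoped Matrix Kronecker ComplexOrder

noncomputable section

/-- Hermitian inner product on `n → ℂ` (conjugate-linear in the first argument). -/
def cinner {n : Type*} [Fintype n] (v w : n → ℂ) : ℂ :=
  ∑ i, (starRingEnd ℂ) (v i) * w i

/-- Tensor (Kronecker) product of vectors. -/
def tensorVec {α β : Type*} (v : α → ℂ) (w : β → ℂ) : α × β → ℂ :=
  fun p => v p.1 * w p.2

/-- The projector `|v⟩⟨v|`. -/
def vecProj {n : Type*} (v : n → ℂ) : Matrix n n ℂ :=
  Matrix.of fun i j => v i * (starRingEnd ℂ) (v j)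

/-- A density matrix: positive semidefinite with unit trace. -/
def IsDensityMatrix {n : Type*} [Fintype n] (ρ : Matrix n n ℂ) : Prop :=
  ρ.PosSemidef ∧ ρ.trace = 1

open Classical in
/-- Positive semidefinite square root (0 on non-PSD input). -/
def msqrt {n : Type*} [Fintype n] [DecidableEq n] (ρ : Matrix n n ℂ) : Matrix n n ℂ :=
  if h : ρ.PosSemidef then
    (h.1.eigenvectorUnitary : Matrix n n ℂ) *
      Matrix.diagonal ((↑) ∘ Real.sqrt ∘ h.1.eigenvalues) *
      (star (h.1.eigenvectorUnitary : Matrix n n ℂ)) else 0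

/-- Uhlmann root fidelity `F(ρ,σ) = tr √(√ρ σ √ρ)`. -/
def rootFidelity {n : Type*} [Fintype n] [DecidableEq n] (ρ σ : Matrix n n ℂ) : ℝ :=
  ((msqrt (msqrt ρ * σ * msqrt ρ)).trace).re

/-- Partial trace over the second tensor factor. -/
def ptraceC {α γ : Type*} [Fintype γ] (ρ : Matrix (α × γ) (α × γ) ℂ) : Matrix α α ℂ :=
  Matrix.of fun i j => ∑ k, ρ (i, k) (j, k)

/-- Partial trace over the first tensor factor. -/
def ptraceA {α β : Type*} [Fintype α] (ρ : Matrix (α × β) (α × β) ℂ) : Matrix β β ℂ :=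
  Matrix.of fun i j => ∑ k, ρ (k, i) (k, j)

/-- Partial transpose on the second tensor factor. -/
def ptB {α β : Type*} (ρ : Matrix (α × β) (α × β) ℂ) : Matrix (α × β) (α × β) ℂ :=
  Matrix.of fun p q => ρ (p.1, q.2) (q.1, p.2)

open Classical in
/-- Negativity: the sum of the absolute values of the negative eigenvalues of
the partial transpose (0 if the partial transpose is not Hermitian). -/
def negativity {α β : Type*} [Fintype α] [Fintype β] [DecidableEq α] [DecidableEq β]
    (ρ : Matrix (α × β) (α × β) ℂ) : ℝ :=
  if h : (ptB ρ).IsHermitian then ∑ i, max 0 (- h.eigenvalues i) else 0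

/-- A family of vectors is an orthonormal basis family (orthonormal, indexed by the
same finite type as the dimension, hence a basis). -/
def IsONB {n : Type*} [Fintype n] [DecidableEq n] (x : n → n → ℂ) : Prop :=
  ∀ j k, cinner (x j) (x k) = if j = k then 1 else 0

/-- Separability: a finite convex combination of projectors onto product unit vectors. -/
def IsSeparableDM {α β : Type*} [Fintype α] [Fintype β]
    (ρ : Matrix (α × β) (α × β) ℂ) : Prop :=
  ∃ (m : ℕ) (p : Fin m → ℝ) (a : Fin m → α → ℂ) (b : Fin m → β → ℂ),
    (∀ j, 0 ≤ p j) ∧ (∑ j, p j = 1) ∧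
    (∀ j, cinner (a j) (a j) = 1) ∧ (∀ j, cinner (b j) (b j) = 1) ∧
    ρ = ∑ j, (p j : ℂ) • vecProj (tensorVec (a j) (b j))

/-- A maximally entangled state on `ℂ^d ⊗ ℂ^d`. -/
def IsMaxEnt {d : ℕ} (Ψ : Fin d × Fin d → ℂ) : Prop :=
  ∃ x y : Fin d → Fin d → ℂ, IsONB x ∧ IsONB y ∧
    Ψ = ((Real.sqrt d : ℂ)⁻¹) • ∑ j, tensorVec (x j) (y j)

/-!
In the eigenbasis of the mediator, `H` is block diagonal: on the block of the basis state `k` of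
`C` it is `f k • (A ⊗ 1) + f' k • (1 ⊗ B)`, a sum of two commuting local terms, so the evolution on
that block is a product `U_k ⊗ V_k` of local unitaries. Tracing out `C` leaves the mixture
`∑ k, (ρC)ₖₖ • (U_k ⊗ V_k) ρAB (U_k ⊗ V_k)ᴴ`, whose weights are the diagonal of `ρC`; local
unitaries map product states to product states, and mixtures of separable states are separable.
-/

open Matrix NormedSpace

namespace Matrix

variable {𝕜 l m n : Type*} [RCLike 𝕜] [Fintype l] [DecidableEq l] [Fintype m] [DecidableEq m]
  [Fintype n] [DecidableEq n]

open scoped Norms.Operator in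
theorem exp_blockDiagonal_eq (v : n → Matrix m m 𝕜) :
    exp (blockDiagonal v) = blockDiagonal fun k => exp (v k) := by
  rw [exp_blockDiagonal]
  exact congrArg blockDiagonal (funext fun k => map_exp (Pi.evalRingHom _ k) (continuous_apply k) v)

open scoped Norms.Operator in
theorem exp_reindex (e : m ≃ n) (M : Matrix m m 𝕜) :
    exp (reindex e e M) = reindex e e (exp M) :=
  (map_exp (reindexAlgEquiv 𝕜 𝕜 e) (continuous_id.matrix_reindex e e) M).symm

theorem exp_kronecker_one (X : Matrix m m 𝕜) :
    exp (X ⊗ₖ (1 : Matrix n n 𝕜)) = exp X ⊗ₖ (1 : Matrix n n 𝕜) := by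
  rw [kronecker_one, kronecker_one, exp_blockDiagonal_eq]

theorem exp_one_kronecker (Y : Matrix n n 𝕜) :
    exp ((1 : Matrix m m 𝕜) ⊗ₖ Y) = (1 : Matrix m m 𝕜) ⊗ₖ exp Y := by
  rw [one_kronecker, one_kronecker, exp_reindex, exp_blockDiagonal_eq]

theorem exp_kronecker_one_add_one_kronecker (X : Matrix m m 𝕜) (Y : Matrix n n 𝕜) :
    exp (X ⊗ₖ (1 : Matrix n n 𝕜) + (1 : Matrix m m 𝕜) ⊗ₖ Y) = exp X ⊗ₖ exp Y := by
  have hcomm : Commute (X ⊗ₖ (1 : Matrix n n 𝕜)) ((1 : Matrix m m 𝕜) ⊗ₖ Y) := by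
    simp only [Commute, SemiconjBy, ← mul_kronecker_mul, Matrix.mul_one, Matrix.one_mul]
  rw [exp_add_of_commute _ _ hcomm, exp_kronecker_one, exp_one_kronecker, ← mul_kronecker_mul,
    Matrix.mul_one, Matrix.one_mul]

theorem IsHermitian.exp_smul_mem_unitaryGroup {A : Matrix m m 𝕜} (hA : A.IsHermitian) {z : 𝕜}
    (hz : z ∈ skewAdjoint 𝕜) : NormedSpace.exp (z • A) ∈ unitaryGroup m 𝕜 := by
  have hskew : (z • A)ᴴ = -(z • A) := by
    rw [conjTranspose_smul, hA.eq, skewAdjoint.mem_iff.mp hz, neg_smul]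
  rw [mem_unitaryGroup_iff', star_eq_conjTranspose, ← exp_conjTranspose, hskew,
    ← Matrix.exp_add_of_commute _ _ (Commute.refl (z • A)).neg_left, neg_add_cancel,
    NormedSpace.exp_zero]

theorem IsHermitian.conjTranspose_exp_smul {A : Matrix m m 𝕜} (hA : A.IsHermitian) (z : 𝕜) :
    (NormedSpace.exp (z • A))ᴴ = NormedSpace.exp (star z • A) := by
  rw [← exp_conjTranspose, conjTranspose_smul, hA.eq]

theorem exp_smul_kronecker_diagonal_add (c : 𝕜) (A : Matrix l l 𝕜) (B : Matrix m m 𝕜)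
    (d d' : n → 𝕜) :
    exp (c • ((A ⊗ₖ (1 : Matrix m m 𝕜)) ⊗ₖ diagonal d + ((1 : Matrix l l 𝕜) ⊗ₖ B) ⊗ₖ diagonal d'))
      = blockDiagonal fun k => exp ((c * d k) • A) ⊗ₖ exp ((c * d' k) • B) := by
  rw [kronecker_diagonal, kronecker_diagonal, ← blockDiagonal_add, ← blockDiagonal_smul,
    exp_blockDiagonal_eq]
  congr 1
  funext k
  rw [← exp_kronecker_one_add_one_kronecker]
  simp only [Pi.add_apply, Pi.smul_apply, op_smul_eq_smul, smul_add, smul_smul, smul_kronecker,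
    kronecker_smul]

end Matrix

section Separability

variable {α β : Type*}

theorem vecProj_eq_vecMulVec (v : α → ℂ) : vecProj v = vecMulVec v (star v) := rfl

theorem vecProj_tensorVec (a : α → ℂ) (b : β → ℂ) :
    vecProj (tensorVec a b) = vecProj a ⊗ₖ vecProj b := by
  ext ⟨i, k⟩ ⟨j, l⟩
  simp only [vecProj, tensorVec, of_apply, kroneckerMap_apply, map_mul]
  ring

variable [Fintype α] [Fintype β]

theorem mul_vecProj_mul_conjTranspose (P : Matrix α α ℂ) (v : α → ℂ) :
    P * vecProj v * Pᴴ = vecProj (P *ᵥ v) := by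
  rw [vecProj_eq_vecMulVec, vecProj_eq_vecMulVec, mul_vecMulVec, vecMulVec_mul, star_mulVec]

theorem cinner_mulVec_mulVec [DecidableEq α] {P : Matrix α α ℂ} (hP : P ∈ unitaryGroup α ℂ)
    (v w : α → ℂ) : cinner (P *ᵥ v) (P *ᵥ w) = cinner v w := by
  change star (P *ᵥ v) ⬝ᵥ (P *ᵥ w) = star v ⬝ᵥ w
  rw [star_mulVec, dotProduct_mulVec, vecMul_vecMul, ← star_eq_conjTranspose,
    Unitary.star_mul_self_of_mem hP, vecMul_one]

theorem isSeparableDM_of_fintype {ι : Type*} [Fintype ι] (p : ι → ℝ) (a : ι → α → ℂ)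
    (b : ι → β → ℂ) (hp : ∀ i, 0 ≤ p i) (hp1 : ∑ i, p i = 1) (ha : ∀ i, cinner (a i) (a i) = 1)
    (hb : ∀ i, cinner (b i) (b i) = 1) :
    IsSeparableDM (∑ i, (p i : ℂ) • vecProj (tensorVec (a i) (b i))) := by
  let e := (Fintype.equivFin ι).symm
  exact ⟨Fintype.card ι, p ∘ e, a ∘ e, b ∘ e, fun _ => hp _, (e.sum_comp p).trans hp1,
    fun _ => ha _, fun _ => hb _, (e.sum_comp _).symm⟩

theorem IsSeparableDM.conj_kronecker [DecidableEq α] [DecidableEq β]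
    {ρ : Matrix (α × β) (α × β) ℂ} (h : IsSeparableDM ρ) {P : Matrix α α ℂ} {Q : Matrix β β ℂ}
    (hP : P ∈ unitaryGroup α ℂ) (hQ : Q ∈ unitaryGroup β ℂ) :
    IsSeparableDM ((P ⊗ₖ Q) * ρ * (P ⊗ₖ Q)ᴴ) := by
  obtain ⟨m, p, a, b, hp, hp1, ha, hb, rfl⟩ := h
  refine ⟨m, p, fun j => P *ᵥ a j, fun j => Q *ᵥ b j, hp, hp1,
    fun j => (cinner_mulVec_mulVec hP _ _).trans (ha j),
    fun j => (cinner_mulVec_mulVec hQ _ _).trans (hb j), ?_⟩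
  simp only [Matrix.mul_sum, Matrix.sum_mul, Matrix.mul_smul, Matrix.smul_mul, vecProj_tensorVec,
    conjTranspose_kronecker, ← mul_kronecker_mul, mul_vecProj_mul_conjTranspose]

theorem IsSeparableDM.sum_smul {ι : Type*} [Fintype ι] {c : ι → ℂ} (hc : ∀ i, 0 ≤ c i)
    (hc1 : ∑ i, c i = 1) {ρ : ι → Matrix (α × β) (α × β) ℂ} (h : ∀ i, IsSeparableDM (ρ i)) :
    IsSeparableDM (∑ i, c i • ρ i) := by
  choose m p a b hp hp1 ha hb hρ using h
  have hc_re : ∀ i, ((c i).re : ℂ) = c i := fun i =>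
    (Complex.eq_re_of_ofReal_le (r := 0) (by simpa using hc i)).symm
  convert isSeparableDM_of_fintype (ι := Σ i, Fin (m i)) (fun x => (c x.1).re * p x.1 x.2)
    (fun x => a x.1 x.2) (fun x => b x.1 x.2)
    (fun x => mul_nonneg (Complex.nonneg_iff.mp (hc x.1)).1 (hp x.1 x.2)) ?_
    (fun x => ha x.1 x.2) (fun x => hb x.1 x.2) using 1
  · simp only [Fintype.sum_sigma, hρ, Finset.smul_sum, smul_smul, Complex.ofReal_mul, hc_re]
  · simp only [Fintype.sum_sigma, ← Finset.mul_sum, hp1, mul_one]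
    rw [← Complex.re_sum, hc1, Complex.one_re]

end Separability

theorem ptraceC_blockDiagonal_mul_kronecker_mul {α γ : Type*} [Fintype α] [Fintype γ]
    [DecidableEq γ] (V W : γ → Matrix α α ℂ) (X : Matrix α α ℂ) (C : Matrix γ γ ℂ) :
    ptraceC (blockDiagonal V * (X ⊗ₖ C) * blockDiagonal W) = ∑ k, C k k • (V k * X * W k) := by
  ext i j
  simp only [ptraceC, of_apply, Matrix.sum_apply, Matrix.smul_apply, smul_eq_mul, mul_apply,
    blockDiagonal_apply, kroneckerMap_apply, Fintype.sum_prod_type, ite_mul, mul_ite, zero_mul,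
    mul_zero, Finset.sum_ite_eq, Finset.sum_ite_eq', Finset.mem_univ, if_true, Finset.sum_mul,
    Finset.mul_sum]
  refine Finset.sum_congr rfl fun k _ => Finset.sum_congr rfl fun r _ =>
    Finset.sum_congr rfl fun s _ => by ring

theorem commuting_mediator_no_entanglement_general (dA dB dC : ℕ)
    (A : Matrix (Fin dA) (Fin dA) ℂ) (B : Matrix (Fin dB) (Fin dB) ℂ)
    (hA : A.IsHermitian) (hB : B.IsHermitian)
    (f f' : Fin dC → ℝ)
    (H : Matrix ((Fin dA × Fin dB) × Fin dC) ((Fin dA × Fin dB) × Fin dC) ℂ)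
    (hH : H = (A ⊗ₖ (1 : Matrix (Fin dB) (Fin dB) ℂ)) ⊗ₖ
                Matrix.diagonal (fun k => ((f k : ℝ) : ℂ)) +
              ((1 : Matrix (Fin dA) (Fin dA) ℂ) ⊗ₖ B) ⊗ₖ
                Matrix.diagonal (fun k => ((f' k : ℝ) : ℂ)))
    (ρAB : Matrix (Fin dA × Fin dB) (Fin dA × Fin dB) ℂ)
    (hsep : IsSeparableDM ρAB)
    (ρC : Matrix (Fin dC) (Fin dC) ℂ) (hρC : IsDensityMatrix ρC) :
    ∀ t : ℝ,
      IsSeparableDM (ptraceC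
        (NormedSpace.exp ((-(Complex.I * (t : ℂ))) • H) * (ρAB ⊗ₖ ρC) *
          NormedSpace.exp ((Complex.I * (t : ℂ)) • H))) := by
  intro t
  have hstar : ∀ x : ℝ, star (-(Complex.I * t) * x) = Complex.I * t * x := fun x => by
    simp
  have hskew : ∀ x : ℝ, -(Complex.I * t) * x ∈ skewAdjoint ℂ := fun x => by
    rw [skewAdjoint.mem_iff, hstar]
    ring
  rw [hH, exp_smul_kronecker_diagonal_add, exp_smul_kronecker_diagonal_add,
    ptraceC_blockDiagonal_mul_kronecker_mul]
  refine IsSeparableDM.sum_smul (fun k => hρC.1.diag_nonneg) hρC.2 fun k => ?_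
  rw [← hstar, ← hstar, ← hA.conjTranspose_exp_smul, ← hB.conjTranspose_exp_smul,
    ← conjTranspose_kronecker]
  exact hsep.conj_kronecker (hA.exp_smul_mem_unitaryGroup (hskew _))
    (hB.exp_smul_mem_unitaryGroup (hskew _))

/-- no entanglement via a commuting mediator: for
`H = A ⊗ I ⊗ D + I ⊗ B ⊗ D'` with `D, D'` real diagonal, and an initial state
`ρ_{AB} ⊗ ρ_C` with separable `ρ_{AB}`, the reduced state of `AB` stays separable
at all times. -/
theorem commuting_mediator_no_entanglement (dA dB dC : ℕ)
    (A : Matrix (Fin dA) (Fin dA) ℂ) (B : Matrix (Fin dB) (Fin dB) ℂ)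
    (hA : A.IsHermitian) (hB : B.IsHermitian)
    (f f' : Fin dC → ℝ)
    (H : Matrix ((Fin dA × Fin dB) × Fin dC) ((Fin dA × Fin dB) × Fin dC) ℂ)
    (hH : H = (A ⊗ₖ (1 : Matrix (Fin dB) (Fin dB) ℂ)) ⊗ₖ
                Matrix.diagonal (fun k => ((f k : ℝ) : ℂ)) +
              ((1 : Matrix (Fin dA) (Fin dA) ℂ) ⊗ₖ B) ⊗ₖ
                Matrix.diagonal (fun k => ((f' k : ℝ) : ℂ)))
    (ρAB : Matrix (Fin dA × Fin dB) (Fin dA × Fin dB) ℂ)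
    (hρAB : IsDensityMatrix ρAB) (hsep : IsSeparableDM ρAB)
    (ρC : Matrix (Fin dC) (Fin dC) ℂ) (hρC : IsDensityMatrix ρC) :
    ∀ t : ℝ,
      IsSeparableDM (ptraceC
        (NormedSpace.exp ((-(Complex.I * (t : ℂ))) • H) * (ρAB ⊗ₖ ρC) *
          NormedSpace.exp ((Complex.I * (t : ℂ)) • H))) :=
  commuting_mediator_no_entanglement_general dA dB dC A B hA hB f f' H hH ρAB hsep ρC hρC
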